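/- If H is a forward CRN bisimulation of a CRN (S,R) whose reactions have at most two reactants, then H is ordinarily fluid lumpable: for each block H ∈ H, the sum Σ_{X∈H} F_X(V) can be expressed as a polynomial in the block sums (Σ_{X∈H'} V_X)_{H'∈H}; in particular, for all V ∈ ℝ^S_{≥0}, Σ_{X∈H} F_X(V) = crr(X^H,∅)·V_H + V_H·Σ_{H'∈H} V_{H'}·crr(X^H,{Y^{H'}}) being subtracted from Σ_{H'∈H} pr(Y^{H'},∅,H)·V_{H'} + (1/2)·Σ_{H'∈H} V_{H'}·Σ_{H''∈H} V_{H''}·pr(Y^{H''},{Y^{H'}},H), where X^H denotes any representative of block H and V_{H'} := Σ_{X∈H'} V_X. -/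
import Mathlib


open scoped Classical BigOperators

/-- A chemical reaction `ρ →α π`. -/
structure Reaction (S : Type*) where
  reactant : Multiset S
  product  : Multiset S
  rate     : ℝ

variable {S : Type*}

/-- ρ-reaction rate `crr(X,ρ) = (ρ(X)+1) · Σ_{X+ρ →α π ∈ R} α`. -/
noncomputable def crr [DecidableEq S] (Rs : Finset (Reaction S)) (X : S) (ρ : Multiset S) : ℝ :=
  ((ρ.count X : ℝ) + 1) * ∑ r ∈ Rs, if r.reactant = X ::ₘ ρ then r.rate else 0

/-- ρ-production rate `pr(X,ρ,Z) = (ρ(X)+1) · Σ_{X+ρ →α π ∈ R} α·π(Z)`. -/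
noncomputable def pr [DecidableEq S] (Rs : Finset (Reaction S)) (X : S) (ρ : Multiset S) (Z : S) : ℝ :=
  ((ρ.count X : ℝ) + 1) * ∑ r ∈ Rs, if r.reactant = X ::ₘ ρ then r.rate * (r.product.count Z : ℝ) else 0

/-- production rate towards a set of species: `pr(X,ρ,H) = Σ_{Z ∈ H} pr(X,ρ,Z)`. -/
noncomputable def prB [DecidableEq S] [Fintype S] (Rs : Finset (Reaction S)) (X : S) (ρ : Multiset S) (H : Set S) : ℝ :=
  ∑ Z : S, if Z ∈ H then pr Rs X ρ Z else 0

/-- ρ-flux rate `fr(X,ρ) = Σ_{ρ →α π ∈ R} (π(X)−ρ(X))·α`. -/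
noncomputable def fr [DecidableEq S] (Rs : Finset (Reaction S)) (X : S) (ρ : Multiset S) : ℝ :=
  ∑ r ∈ Rs, if r.reactant = ρ then ((r.product.count X : ℝ) - (ρ.count X : ℝ)) * r.rate else 0

/-- cumulative flux rate `fr(X,M) = Σ_{ρ ∈ M} fr(X,ρ)`. -/
noncomputable def frM [DecidableEq S] (Rs : Finset (Reaction S)) (X : S) (M : Finset (Multiset S)) : ℝ :=
  ∑ ρ ∈ M, fr Rs X ρ

/-- mass-action vector field `F_X(V) = Σ_{ρ→α π}(π(X)−ρ(X))·α·Π_Y V_Y^{ρ(Y)}`. -/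
noncomputable def vf [DecidableEq S] [Fintype S] (Rs : Finset (Reaction S)) (V : S → ℝ) (X : S) : ℝ :=
  ∑ r ∈ Rs, ((r.product.count X : ℝ) - (r.reactant.count X : ℝ)) * r.rate * ∏ Y : S, V Y ^ r.reactant.count Y

/-- `μ` is a choice function for the partition induced by the equivalence `e`:
it maps every species to a fixed representative of its block. -/
def IsChoice (e : S → S → Prop) (μ : S → S) : Prop :=
  (∀ X, e X (μ X)) ∧ ∀ X Y, e X Y → μ X = μ Y

/-- forward splitter condition for a pair `(X,Y)` w.r.t. the partition induced by `e`. -/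
def FSplit [DecidableEq S] [Fintype S] (Rs : Finset (Reaction S)) (e : S → S → Prop) (X Y : S) : Prop :=
  ∀ ρ : Multiset S, crr Rs X ρ = crr Rs Y ρ ∧
    ∀ W : S, prB Rs X ρ {Z | e W Z} = prB Rs Y ρ {Z | e W Z}

/-- `e` is a forward CRN bisimulation. -/
def IsFB [DecidableEq S] [Fintype S] (Rs : Finset (Reaction S)) (e : S → S → Prop) : Prop :=
  Equivalence e ∧ ∀ X Y, e X Y → FSplit Rs e X Y

/-- the `≈`-class (w.r.t. the choice function `μ`) of the reactant multiset `ρ0`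
among reactant multisets occurring in `Rs`. -/
noncomputable def reactClass [DecidableEq S] (Rs : Finset (Reaction S)) (μ : S → S) (ρ0 : Multiset S) : Finset (Multiset S) :=
  (Rs.image Reaction.reactant).filter (fun σ => σ.map μ = ρ0.map μ)

/-- backward splitter condition for a pair `(X,Y)` w.r.t. the choice function `μ`. -/
def BSplit [DecidableEq S] (Rs : Finset (Reaction S)) (μ : S → S) (X Y : S) : Prop :=
  ∀ ρ0 ∈ Rs.image Reaction.reactant,
    frM Rs X (reactClass Rs μ ρ0) = frM Rs Y (reactClass Rs μ ρ0)

/-- `e` (with choice function `μ`) is a backward CRN bisimulation. -/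
def IsBB [DecidableEq S] (Rs : Finset (Reaction S)) (e : S → S → Prop) (μ : S → S) : Prop :=
  Equivalence e ∧ IsChoice e μ ∧ ∀ X Y, e X Y → BSplit Rs μ X Y

/-- `V` is constant on the partition induced by `e`. -/
def ConstOn (e : S → S → Prop) (V : S → ℝ) : Prop := ∀ X Y, e X Y → V X = V Y

/-- the sum of `V` over the block of `W`. -/
noncomputable def blockSum [Fintype S] (e : S → S → Prop) (V : S → ℝ) (W : S) : ℝ :=
  ∑ Z : S, if e W Z then V Z else 0

section Aux
variable [Fintype S] [DecidableEq S]

noncomputable def cntP (p : S → Prop) (m : Multiset S) : ℝ :=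
  ∑ X : S, if p X then (m.count X : ℝ) else 0

set_option linter.unusedSectionVars false in
lemma cons_swap' (X W : S) : X ::ₘ ({W} : Multiset S) = W ::ₘ ({X} : Multiset S) := by
  rw [← Multiset.cons_zero W, ← Multiset.cons_zero X, Multiset.cons_swap]

lemma crr_symm (Rs : Finset (Reaction S)) (X W : S) :
    crr Rs X ({W} : Multiset S) = crr Rs W ({X} : Multiset S) := by
  unfold crr
  rw [cons_swap']
  congr 1
  simp [Multiset.count_singleton, eq_comm]

lemma prB_symm (Rs : Finset (Reaction S)) (X W : S) (H : Set S) :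
    prB Rs X ({W} : Multiset S) H = prB Rs W ({X} : Multiset S) H := by
  unfold prB pr
  rw [cons_swap']
  congr 1; funext Z; congr 2
  simp [Multiset.count_singleton, eq_comm]

lemma prod_pow_count (V : S → ℝ) (m : Multiset S) :
    (∏ Y : S, V Y ^ m.count Y) = (m.map V).prod := by
  induction m using Multiset.induction with
  | empty => simp
  | cons a m ih =>
    simp only [Multiset.count_cons, Multiset.map_cons, Multiset.prod_cons, pow_add,
      Finset.prod_mul_distrib, ih]
    rw [mul_comm]
    congr 1
    rw [show (∏ Y : S, V Y ^ (if Y = a then 1 else 0)) = ∏ Y : S, (if Y = a then V Y else 1) by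
      apply Finset.prod_congr rfl; intro Y _; split <;> simp]
    simp

lemma sum_reps (e : S → S → Prop) (μ : S → S) (he : Equivalence e) (hμ : IsChoice e μ)
    (V f : S → ℝ) :
    ∑ W ∈ Finset.univ.filter (fun W => μ W = W), blockSum e V W * f W
      = ∑ Y : S, V Y * f (μ Y) := by
  obtain ⟨hμ1, hμ2⟩ := hμ
  have hμμ : ∀ Y, μ (μ Y) = μ Y := fun Y => (hμ2 Y (μ Y) (hμ1 Y)).symm
  have key : ∀ W, μ W = W → blockSum e V W * f W
      = ∑ Z : S, if μ Z = W then V Z * f W else 0 := by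
    intro W hW
    rw [blockSum, Finset.sum_mul]
    apply Finset.sum_congr rfl
    intro Z _
    have : e W Z ↔ μ Z = W := by
      constructor
      · intro h; rw [← hμ2 W Z h, hW]
      · intro h; exact he.symm (h ▸ hμ1 Z)
    simp only [this]
    split <;> simp
  rw [Finset.sum_congr rfl (fun W hW => key W (Finset.mem_filter.mp hW).2)]
  rw [Finset.sum_comm]
  apply Finset.sum_congr rfl
  intro Z _
  rw [Finset.sum_ite_eq (Finset.univ.filter (fun W => μ W = W)) (μ Z) (fun W => V Z * f W)]
  simp [hμμ]
set_option linter.unusedSectionVars false in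
lemma pair_eq_iff (A B Z Y : S) :
    ({A, B} : Multiset S) = Z ::ₘ {Y} ↔ (Z = A ∧ Y = B) ∨ (Z = B ∧ Y = A) := by
  constructor
  · intro h
    rw [show ({A, B} : Multiset S) = A ::ₘ {B} from rfl, Multiset.cons_eq_cons] at h
    rcases h with ⟨h1, h2⟩ | ⟨h1, cs, h2, h3⟩
    · exact Or.inl ⟨h1.symm, (Multiset.singleton_inj.mp h2).symm⟩
    · have hcs : cs = 0 := by
        have := congrArg Multiset.card h2
        simpa using this
      subst hcs
      simp only [Multiset.cons_zero, Multiset.singleton_inj] at h2 h3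
      exact Or.inr ⟨h2.symm, h3⟩
  · rintro (⟨rfl, rfl⟩ | ⟨rfl, rfl⟩)
    · rfl
    · exact Multiset.cons_swap _ _ _

set_option linter.unusedSectionVars false in
lemma not_single_eq_pair (A Z Y : S) : ¬ (({A} : Multiset S) = Z ::ₘ {Y}) := by
  intro h
  have := congrArg Multiset.card h
  simp at this

set_option linter.unusedSectionVars false in
lemma not_pair_eq_single (A B Y : S) : ¬ (({A, B} : Multiset S) = ({Y} : Multiset S)) := by
  intro h
  have := congrArg Multiset.card h
  simp at this

lemma sum_pt (a : S) (f : S → ℝ) : (∑ X : S, if X = a then f X else 0) = f a := by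
  simp

lemma sum2_pts (A B : S) (h : A ≠ B) (f : S → S → ℝ) :
    (∑ Y : S, ∑ Z : S, if (Z = A ∧ Y = B) ∨ (Z = B ∧ Y = A) then f Y Z else 0)
      = f B A + f A B := by
  have h1 : ∀ Y Z : S, (if (Z = A ∧ Y = B) ∨ (Z = B ∧ Y = A) then f Y Z else 0)
      = (if Y = B then (if Z = A then f Y Z else 0) else 0)
        + (if Y = A then (if Z = B then f Y Z else 0) else 0) := by
    intro Y Z
    by_cases hZA : Z = A <;> by_cases hYB : Y = B <;> by_cases hZB : Z = B <;>
      by_cases hYA : Y = A <;> simp_all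
  simp only [h1, Finset.sum_add_distrib]
  simp

end Aux

section Aux2
variable [Fintype S] [DecidableEq S]

lemma P1 (V : S → ℝ) (m : Multiset S) (hm : Multiset.card m = 1 ∨ Multiset.card m = 2) :
    (∑ Y : S, if m = {Y} then V Y else 0)
      + (1/2) * (∑ Y : S, ∑ Z : S, if m = Z ::ₘ {Y}
          then ((({Y} : Multiset S).count Z : ℝ) + 1) * V Y * V Z else 0)
      = ∏ W : S, V W ^ m.count W := by
  rcases hm with h1 | h2
  · obtain ⟨a, rfl⟩ := Multiset.card_eq_one.mp h1
    rw [prod_pow_count]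
    simp [Multiset.singleton_inj, not_single_eq_pair, eq_comm]
  · obtain ⟨A, B, rfl⟩ := Multiset.card_eq_two.mp h2
    rw [prod_pow_count]
    simp only [not_pair_eq_single, if_false, Finset.sum_const_zero, zero_add, pair_eq_iff]
    rcases eq_or_ne A B with rfl | hAB
    · have : ∀ Y Z : S, ((Z = A ∧ Y = A) ∨ (Z = A ∧ Y = A)) ↔ (Y = A ∧ Z = A) := by tauto
      simp only [this, ite_and]
      simp [Multiset.count_singleton]
      ring
    · rw [sum2_pts A B hAB]
      simp [Multiset.count_singleton, hAB, hAB.symm]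
      ring

lemma P2 (p : S → Prop) (V : S → ℝ) (m : Multiset S)
    (hm : Multiset.card m = 1 ∨ Multiset.card m = 2) :
    (∑ X : S, if p X ∧ m = {X} then V X else 0)
      + (∑ X : S, ∑ Z : S, if p X ∧ m = X ::ₘ {Z}
          then ((({Z} : Multiset S).count X : ℝ) + 1) * V X * V Z else 0)
      = cntP p m * ∏ W : S, V W ^ m.count W := by
  rcases hm with h1 | h2
  · obtain ⟨a, rfl⟩ := Multiset.card_eq_one.mp h1
    rw [prod_pow_count, cntP]
    simp [Multiset.singleton_inj, not_single_eq_pair, eq_comm, Multiset.count_singleton]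
    have l1 : ∀ x : S, (if p x ∧ a = x then V x else 0)
        = if a = x then (if p a then V a else 0) else 0 := by
      intro x; by_cases h : a = x <;> by_cases h2 : p x <;> simp_all
    have l2 : ∀ x : S, (if p x then (if a = x then (1:ℝ) else 0) else 0)
        = if a = x then (if p a then (1:ℝ) else 0) else 0 := by
      intro x; by_cases h : a = x <;> by_cases h2 : p x <;> simp_all
    simp only [l1, l2, Finset.sum_ite_eq, Finset.mem_univ, if_true]
    by_cases h : p a <;> simp [h]
  · obtain ⟨A, B, rfl⟩ := Multiset.card_eq_two.mp h2
    rw [prod_pow_count, cntP]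
    simp only [not_pair_eq_single, and_false, if_false, Finset.sum_const_zero, zero_add,
      pair_eq_iff]
    rcases eq_or_ne A B with rfl | hAB
    · have l1 : ∀ x x1 : S, (if p x ∧ (x = A ∧ x1 = A ∨ x = A ∧ x1 = A)
            then ((Multiset.count x ({x1} : Multiset S) : ℝ) + 1) * V x * V x1 else 0)
          = if x1 = A then (if x = A then (if p A then ((1:ℝ)+1) * V A * V A else 0) else 0)
            else 0 := by
        intro x x1
        by_cases h1 : x = A <;> by_cases h2 : x1 = A <;> by_cases h3 : p x <;>
          simp_all [Multiset.count_singleton]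
      have l2 : ∀ X : S, (if p X then ((Multiset.count X ({A, A} : Multiset S)) : ℝ) else 0)
          = if X = A then (if p A then (2:ℝ) else 0) else 0 := by
        intro X
        by_cases h1 : X = A <;> by_cases h3 : p X <;>
          simp_all [Multiset.count_cons, Multiset.count_singleton]
      simp only [l1, l2, Finset.sum_ite_eq', Finset.mem_univ, if_true]
      by_cases h : p A <;> simp [h] <;> ring
    · have l1 : ∀ x x1 : S, (if p x ∧ (x = A ∧ x1 = B ∨ x = B ∧ x1 = A)
            then ((Multiset.count x ({x1} : Multiset S) : ℝ) + 1) * V x * V x1 else 0)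
          = (if x = A then (if x1 = B then (if p A then V A * V B else 0) else 0) else 0)
            + (if x = B then (if x1 = A then (if p B then V B * V A else 0) else 0) else 0) := by
        intro x x1
        by_cases h1 : x = A <;> by_cases h2 : x = B <;> by_cases h3 : x1 = A <;>
          by_cases h4 : x1 = B <;> by_cases h5 : p x <;>
          simp_all [Multiset.count_singleton, hAB, hAB.symm]
      have l2 : ∀ X : S, (if p X then ((Multiset.count X ({A, B} : Multiset S)) : ℝ) else 0)
          = (if X = A then (if p A then (1:ℝ) else 0) else 0)
            + (if X = B then (if p B then (1:ℝ) else 0) else 0) := by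
        intro X
        by_cases h1 : X = A <;> by_cases h2 : X = B <;> by_cases h3 : p X <;>
          simp_all [Multiset.count_cons, Multiset.count_singleton, hAB, hAB.symm]
      simp only [l1, l2, Finset.sum_add_distrib, Finset.sum_ite_eq', Finset.mem_univ, if_true]
      by_cases hA : p A <;> by_cases hB : p B <;> simp [hA, hB] <;> ring
end Aux2

section Aux3
variable [Fintype S] [DecidableEq S]

lemma prB_eq (Rs : Finset (Reaction S)) (p : S → Prop) (Y : S) (ρ : Multiset S) :
    prB Rs Y ρ {Z | p Z}
      = ((ρ.count Y : ℝ) + 1) *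
          ∑ r ∈ Rs, (if r.reactant = Y ::ₘ ρ then r.rate * cntP p r.product else 0) := by
  have step1 : ∀ Z : S, (if Z ∈ {Z | p Z} then pr Rs Y ρ Z else 0)
      = ((ρ.count Y : ℝ) + 1) * ∑ r ∈ Rs, (if r.reactant = Y ::ₘ ρ
          then r.rate * (if p Z then (r.product.count Z : ℝ) else 0) else 0) := by
    intro Z
    by_cases h : p Z
    · simp only [Set.mem_setOf_eq, h, if_true, pr]
    · simp only [Set.mem_setOf_eq, h, if_false]
      simp
  rw [prB, Finset.sum_congr rfl (fun Z _ => step1 Z), ← Finset.mul_sum]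
  congr 1
  rw [Finset.sum_comm]
  refine Finset.sum_congr rfl fun r _ => ?_
  by_cases h : r.reactant = Y ::ₘ ρ <;> simp [h, cntP, Finset.mul_sum]

lemma swap1 (Rs : Finset (Reaction S)) (w : S → ℝ) (cond : Reaction S → S → Prop)
    [∀ r X, Decidable (cond r X)] (coef : Reaction S → ℝ) :
    ∑ X : S, w X * ∑ r ∈ Rs, (if cond r X then coef r else 0)
      = ∑ r ∈ Rs, coef r * ∑ X : S, (if cond r X then w X else 0) := by
  simp only [Finset.mul_sum]
  rw [Finset.sum_comm]
  refine Finset.sum_congr rfl fun r _ => ?_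
  refine Finset.sum_congr rfl fun X _ => ?_
  split <;> ring

lemma swap2 (Rs : Finset (Reaction S)) (w : S → S → ℝ) (cond : Reaction S → S → S → Prop)
    [∀ r X Z, Decidable (cond r X Z)] (coef : Reaction S → ℝ) :
    ∑ X : S, ∑ Z : S, w X Z * ∑ r ∈ Rs, (if cond r X Z then coef r else 0)
      = ∑ r ∈ Rs, coef r * ∑ X : S, ∑ Z : S, (if cond r X Z then w X Z else 0) := by
  have h1 : ∀ X : S, ∑ Z : S, w X Z * ∑ r ∈ Rs, (if cond r X Z then coef r else 0)
      = ∑ r ∈ Rs, coef r * ∑ Z : S, (if cond r X Z then w X Z else 0) :=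
    fun X => swap1 Rs (w X) (fun r Z => cond r X Z) coef
  rw [Finset.sum_congr rfl (fun X _ => h1 X), Finset.sum_comm]
  refine Finset.sum_congr rfl fun r _ => ?_
  rw [Finset.mul_sum]

lemma expandLHS (Rs : Finset (Reaction S)) (p : S → Prop) (V : S → ℝ) :
    (∑ X : S, if p X then vf Rs V X else 0)
      = ∑ r ∈ Rs, (cntP p r.product - cntP p r.reactant) * r.rate *
          ∏ Y : S, V Y ^ r.reactant.count Y := by
  have step : ∀ X : S, (if p X then vf Rs V X else 0)
      = ∑ r ∈ Rs, (if p X then ((r.product.count X : ℝ) - (r.reactant.count X : ℝ)) else 0)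
          * r.rate * ∏ Y : S, V Y ^ r.reactant.count Y := by
    intro X
    by_cases h : p X <;> simp [h, vf]
  rw [Finset.sum_congr rfl (fun X _ => step X), Finset.sum_comm]
  refine Finset.sum_congr rfl fun r _ => ?_
  rw [← Finset.sum_mul, ← Finset.sum_mul]
  congr 2
  rw [cntP, cntP, ← Finset.sum_sub_distrib]
  refine Finset.sum_congr rfl fun X _ => ?_
  split <;> simp

lemma expandA (Rs : Finset (Reaction S)) (p : S → Prop) (V : S → ℝ) :
    (∑ Y : S, V Y * prB Rs Y 0 {Z | p Z})
      = ∑ r ∈ Rs, (r.rate * cntP p r.product) *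
          (∑ Y : S, if r.reactant = {Y} then V Y else 0) := by
  rw [← swap1 Rs V (fun r Y => r.reactant = {Y}) (fun r => r.rate * cntP p r.product)]
  refine Finset.sum_congr rfl fun Y _ => ?_
  congr 1
  rw [prB_eq]
  simp

lemma expandB (Rs : Finset (Reaction S)) (p : S → Prop) (V : S → ℝ) :
    (∑ Y : S, V Y * ∑ Z : S, V Z * prB Rs Z {Y} {Z' | p Z'})
      = ∑ r ∈ Rs, (r.rate * cntP p r.product) *
          (∑ Y : S, ∑ Z : S, if r.reactant = Z ::ₘ {Y}
            then ((({Y} : Multiset S).count Z : ℝ) + 1) * V Y * V Z else 0) := by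
  rw [← swap2 Rs (fun Y Z => ((({Y} : Multiset S).count Z : ℝ) + 1) * V Y * V Z)
      (fun r Y Z => r.reactant = Z ::ₘ {Y}) (fun r => r.rate * cntP p r.product)]
  refine Finset.sum_congr rfl fun Y _ => ?_
  rw [Finset.mul_sum]
  refine Finset.sum_congr rfl fun Z _ => ?_
  rw [prB_eq]
  ring

lemma expandC (Rs : Finset (Reaction S)) (p : S → Prop) (V : S → ℝ) :
    (∑ X : S, if p X then V X * crr Rs X 0 else 0)
      = ∑ r ∈ Rs, r.rate * (∑ X : S, if p X ∧ r.reactant = {X} then V X else 0) := by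
  rw [← swap1 Rs V (fun r X => p X ∧ r.reactant = {X}) (fun r => r.rate)]
  refine Finset.sum_congr rfl fun X _ => ?_
  by_cases h : p X
  · simp only [h, true_and, if_true]
    congr 1
    simp [crr]
  · simp [h]

lemma expandD (Rs : Finset (Reaction S)) (p : S → Prop) (V : S → ℝ) :
    (∑ X : S, if p X then V X * (∑ Z : S, V Z * crr Rs X {Z}) else 0)
      = ∑ r ∈ Rs, r.rate *
          (∑ X : S, ∑ Z : S, if p X ∧ r.reactant = X ::ₘ {Z}
            then ((({Z} : Multiset S).count X : ℝ) + 1) * V X * V Z else 0) := by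
  rw [← swap2 Rs (fun X Z => ((({Z} : Multiset S).count X : ℝ) + 1) * V X * V Z)
      (fun r X Z => p X ∧ r.reactant = X ::ₘ {Z}) (fun r => r.rate)]
  refine Finset.sum_congr rfl fun X _ => ?_
  by_cases h : p X
  · simp only [h, true_and, if_true]
    rw [Finset.mul_sum]
    refine Finset.sum_congr rfl fun Z _ => ?_
    rw [crr]
    ring
  · simp [h]
end Aux3


/-- Explicit block-sum formula for the aggregated vector field of a forward CRN
bisimulation of a network with only unary or binary reactions:
`Σ_{X∈H} F_X(V)` equals the production terms minus the depletion terms, all expressed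
in the block sums, with representatives chosen by the choice function `μ`. -/
theorem stmt8 {S : Type*} [Fintype S] [DecidableEq S]
    (Rs : Finset (Reaction S)) (hpos : ∀ r ∈ Rs, 0 < r.rate)
    (helem : ∀ r ∈ Rs, Multiset.card r.reactant = 1 ∨ Multiset.card r.reactant = 2)
    (e : S → S → Prop) (μ : S → S)
    (hfb : IsFB Rs e) (hμ : IsChoice e μ)
    (X0 : S) (V : S → ℝ) (hV : ∀ X, 0 ≤ V X) :
    (∑ X : S, if e X0 X then vf Rs V X else 0) =
      ((∑ W ∈ Finset.univ.filter (fun W => μ W = W),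
          prB Rs W (0 : Multiset S) {Z | e X0 Z} * blockSum e V W)
        + (1/2) * ∑ W ∈ Finset.univ.filter (fun W => μ W = W), blockSum e V W *
            ∑ W' ∈ Finset.univ.filter (fun W'' => μ W'' = W''), blockSum e V W' *
              prB Rs W' ({W} : Multiset S) {Z | e X0 Z})
      - (crr Rs (μ X0) (0 : Multiset S) * blockSum e V X0
        + blockSum e V X0 * ∑ W ∈ Finset.univ.filter (fun W => μ W = W),
            blockSum e V W * crr Rs (μ X0) ({W} : Multiset S)) := by
  obtain ⟨heq, hsplit⟩ := hfb
  obtain ⟨hμ1, hμ2⟩ := hμ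
  have hEe : ∀ {X Y : S}, e X Y → ∀ ρ : Multiset S, crr Rs X ρ = crr Rs Y ρ :=
    fun h ρ => (hsplit _ _ h ρ).1
  have hEp : ∀ {X Y : S}, e X Y → ∀ ρ : Multiset S,
      prB Rs X ρ {Z | e X0 Z} = prB Rs Y ρ {Z | e X0 Z} :=
    fun h ρ => (hsplit _ _ h ρ).2 X0
  -- A term
  have hA : (∑ W ∈ Finset.univ.filter (fun W => μ W = W),
        prB Rs W (0 : Multiset S) {Z | e X0 Z} * blockSum e V W)
      = ∑ Y : S, V Y * prB Rs Y 0 {Z | e X0 Z} := by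
    rw [Finset.sum_congr rfl (fun W _ => mul_comm (prB Rs W 0 {Z | e X0 Z}) (blockSum e V W)),
      sum_reps e μ heq ⟨hμ1, hμ2⟩ V (fun W => prB Rs W 0 {Z | e X0 Z})]
    exact Finset.sum_congr rfl fun Y _ => by rw [← hEp (hμ1 Y) 0]
  -- B term
  have hBinner : ∀ W : S, (∑ W' ∈ Finset.univ.filter (fun W'' => μ W'' = W''),
        blockSum e V W' * prB Rs W' ({W} : Multiset S) {Z | e X0 Z})
      = ∑ Z : S, V Z * prB Rs Z ({W} : Multiset S) {Z' | e X0 Z'} := by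
    intro W
    rw [sum_reps e μ heq ⟨hμ1, hμ2⟩ V (fun W' => prB Rs W' ({W} : Multiset S) {Z | e X0 Z})]
    exact Finset.sum_congr rfl fun Z _ => by rw [← hEp (hμ1 Z) ({W} : Multiset S)]
  have hB : (∑ W ∈ Finset.univ.filter (fun W => μ W = W), blockSum e V W *
        ∑ W' ∈ Finset.univ.filter (fun W'' => μ W'' = W''), blockSum e V W' *
          prB Rs W' ({W} : Multiset S) {Z | e X0 Z})
      = ∑ Y : S, V Y * ∑ Z : S, V Z * prB Rs Z ({Y} : Multiset S) {Z' | e X0 Z'} := by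
    rw [Finset.sum_congr rfl (fun W _ => by rw [hBinner W]),
      sum_reps e μ heq ⟨hμ1, hμ2⟩ V
        (fun W => ∑ Z : S, V Z * prB Rs Z ({W} : Multiset S) {Z' | e X0 Z'})]
    refine Finset.sum_congr rfl fun Y _ => ?_
    congr 1
    refine Finset.sum_congr rfl fun Z _ => ?_
    congr 1
    rw [prB_symm, ← hEp (hμ1 Y) ({Z} : Multiset S), prB_symm]
  -- C term
  have hC : crr Rs (μ X0) (0 : Multiset S) * blockSum e V X0
      = ∑ X : S, (if e X0 X then V X * crr Rs X 0 else 0) := by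
    rw [blockSum, Finset.mul_sum]
    refine Finset.sum_congr rfl fun X _ => ?_
    by_cases h : e X0 X
    · simp only [h, if_true]
      rw [(hEe (heq.trans (heq.symm h) (hμ1 X0)) 0 : crr Rs X 0 = crr Rs (μ X0) 0), mul_comm]
    · simp [h]
  -- D term
  have hD : blockSum e V X0 * (∑ W ∈ Finset.univ.filter (fun W => μ W = W),
        blockSum e V W * crr Rs (μ X0) ({W} : Multiset S))
      = ∑ X : S, (if e X0 X then V X * (∑ Z : S, V Z * crr Rs X {Z}) else 0) := by
    rw [sum_reps e μ heq ⟨hμ1, hμ2⟩ V (fun W => crr Rs (μ X0) ({W} : Multiset S)),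
      Finset.sum_congr rfl (fun Z _ => by
        rw [crr_symm, ← hEe (hμ1 Z) ({μ X0} : Multiset S), crr_symm]),
      blockSum, Finset.sum_mul]
    refine Finset.sum_congr rfl fun X _ => ?_
    by_cases h : e X0 X
    · simp only [h, if_true]
      congr 1
      refine Finset.sum_congr rfl fun Z _ => ?_
      congr 1
      exact (hEe (heq.trans (heq.symm h) (hμ1 X0)) ({Z} : Multiset S)).symm
    · simp [h]
  rw [hA, hB, hC, hD, expandLHS Rs (e X0) V, expandA Rs (e X0) V, expandB Rs (e X0) V,
    expandC Rs (e X0) V, expandD Rs (e X0) V, Finset.mul_sum,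
    ← Finset.sum_add_distrib, ← Finset.sum_add_distrib, ← Finset.sum_sub_distrib]
  refine Finset.sum_congr rfl fun r hr => ?_
  have h1 := P1 V r.reactant (helem r hr)
  have h2 := P2 (e X0) V r.reactant (helem r hr)
  linear_combination (-(r.rate * cntP (e X0) r.product)) * h1 + r.rate * h2
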